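/- Let a be a bounded automorphism of the regular rooted d-ary tree T. Then a and a⁻¹ are conjugate in the group F(X) of finite-state automorphisms. -/

import Mathlib

open List

/-- Vertices of the rooted `d`-ary tree `T`: finite words over the alphabet
`X = Fin d`. -/
abbrev Vertex (d : ℕ) := List (Fin d)

/-- `g` is an automorphism of the rooted `d`-ary tree: a bijection of the
vertex set `X*` preserving word length and the prefix relation. -/
def IsTreeAut {d : ℕ} (g : Equiv.Perm (Vertex d)) : Prop :=
  (∀ v : Vertex d, (g v).length = v.length) ∧
    ∀ v w : Vertex d, g v <+: g (v ++ w)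

theorem IsTreeAut.prefix_mono {d : ℕ} {g : Equiv.Perm (Vertex d)} (hg : IsTreeAut g)
    {u u' : Vertex d} (h : u <+: u') : g u <+: g u' := by
  obtain ⟨t, rfl⟩ := h
  exact hg.2 u t

/-- The automorphism group `Aut(T)` of the rooted `d`-ary tree, as a subgroup
of the group of permutations of the vertex set. -/
def treeAut (d : ℕ) : Subgroup (Equiv.Perm (Vertex d)) where
  carrier := {g | IsTreeAut g}
  one_mem' := ⟨fun _ => rfl, fun v w => ⟨w, rfl⟩⟩
  mul_mem' := by
    intro g h hg hh
    obtain ⟨hg1, hg2⟩ := hg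
    obtain ⟨hh1, hh2⟩ := hh
    refine ⟨fun v => ?_, fun v w => ?_⟩
    · simp [Equiv.Perm.mul_apply, hg1, hh1]
    · obtain ⟨t, ht⟩ := hh2 v w
      simp only [Equiv.Perm.mul_apply]
      rw [← ht]
      exact hg2 (h v) t
  inv_mem' := by
    intro g hgmem
    obtain ⟨hg1, hg2⟩ := hgmem
    have hg : IsTreeAut g := ⟨hg1, hg2⟩
    have hlen' : ∀ v : Vertex d, (g⁻¹ v).length = v.length := by
      intro v
      conv_rhs => rw [← (Equiv.Perm.eq_inv_iff_eq.mp rfl : g (g⁻¹ v) = v)]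
      rw [hg1]
    refine ⟨hlen', fun v w => ?_⟩
    have hle : (g⁻¹ v).length ≤ (g⁻¹ (v ++ w)).length := by
      have h1 := hlen' v
      have h2 := hlen' (v ++ w)
      rw [List.length_append] at h2
      omega
    have htp : (g⁻¹ (v ++ w)).take (g⁻¹ v).length <+: g⁻¹ (v ++ w) :=
      List.take_prefix _ _
    have hgtp : g ((g⁻¹ (v ++ w)).take (g⁻¹ v).length) <+: v ++ w := by
      have := hg.prefix_mono htp
      rwa [show g (g⁻¹ (v ++ w)) = v ++ w from Equiv.Perm.eq_inv_iff_eq.mp rfl] at this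
    have hlen_tp : (g ((g⁻¹ (v ++ w)).take (g⁻¹ v).length)).length = v.length := by
      rw [hg1, List.length_take, min_eq_left hle, hlen' v]
    have hveq : g ((g⁻¹ (v ++ w)).take (g⁻¹ v).length) = v := by
      have h1 := List.prefix_iff_eq_take.mp hgtp
      have h2 := List.prefix_iff_eq_take.mp (List.prefix_append v w)
      rw [h1, hlen_tp]
      exact h2.symm
    have hkey : (g⁻¹ (v ++ w)).take (g⁻¹ v).length = g⁻¹ v := by
      apply g.injective
      rw [hveq, show g (g⁻¹ v) = v from Equiv.Perm.eq_inv_iff_eq.mp rfl]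
    rw [← hkey]
    exact htp

open scoped Classical in
/-- The state (section) `g|_v` of `g` at the vertex `v` : the unique
automorphism satisfying `g (v ++ w) = g v ++ (g|_v) w` for all `w`. -/
noncomputable def state {d : ℕ} (g : Equiv.Perm (Vertex d)) (v : Vertex d) :
    Equiv.Perm (Vertex d) :=
  if h : Function.Bijective (fun w : Vertex d => (g (v ++ w)).drop v.length) then
    Equiv.ofBijective _ h
  else 1

/-- A finite-state automorphism: one having finitely many states.  The
finite-state automorphisms form the group `F(X)`. -/
def FiniteState {d : ℕ} (g : Equiv.Perm (Vertex d)) : Prop :=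
  (Set.range fun v : Vertex d => state g v).Finite

/-- The cardinality of the orbit `Orb_a(v)` of the vertex `v` under the cyclic
group generated by `a`. -/
noncomputable def orbitCard {d : ℕ} (a : Equiv.Perm (Vertex d)) (v : Vertex d) : ℕ :=
  Nat.card (Set.range fun n : ℤ => (a ^ n) v)

/-- The orbit-signalizer `OS(a) = { a^m|_v : v ∈ X^*, m = |Orb_a(v)| }`. -/
noncomputable def OS {d : ℕ} (a : Equiv.Perm (Vertex d)) : Set (Equiv.Perm (Vertex d)) :=
  {s | ∃ v : Vertex d, s = state (a ^ orbitCard a v) v}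

/-- `a` has finite orbit-signalizer. -/
def FiniteOS {d : ℕ} (a : Equiv.Perm (Vertex d)) : Prop := (OS a).Finite

/-- A self-similar (state-closed) subgroup. -/
def SelfSimilar {d : ℕ} (G : Subgroup (Equiv.Perm (Vertex d))) : Prop :=
  ∀ g ∈ G, ∀ v : Vertex d, state g v ∈ G

/-- A contracting group: there is a finite set `N ⊆ G` such that every
`g ∈ G` has all its states in `N` from some level on. -/
def ContractingGroup {d : ℕ} (G : Subgroup (Equiv.Perm (Vertex d))) : Prop :=
  ∃ N : Set (Equiv.Perm (Vertex d)), N.Finite ∧ N ⊆ (G : Set (Equiv.Perm (Vertex d))) ∧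
    ∀ g ∈ G, ∃ n : ℕ, ∀ v : Vertex d, n ≤ v.length → state g v ∈ N

/-- A contracting automorphism: the self-similar group generated by all of its
states is contracting. -/
def ContractingAut {d : ℕ} (f : Equiv.Perm (Vertex d)) : Prop :=
  ContractingGroup (Subgroup.closure (Set.range fun v : Vertex d => state f v))

/-- The activity sequence `θ_k(g)`: the number of vertices `v` of level `k`
whose state `g|_v` acts nontrivially on the first level `X`. -/
noncomputable def theta {d : ℕ} (g : Equiv.Perm (Vertex d)) (k : ℕ) : ℕ :=
  Nat.card {v : Vertex d // v.length = k ∧ ∃ x : Fin d, state g v [x] ≠ [x]}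

/-- A bounded automorphism: a finite-state automorphism with bounded activity
sequence.  The bounded automorphisms form the group `Pol(0)`. -/
def BoundedAut {d : ℕ} (g : Equiv.Perm (Vertex d)) : Prop :=
  FiniteState g ∧ ∃ C : ℕ, ∀ k : ℕ, theta g k ≤ C

/-- A polynomial automorphism (an element of `Pol(∞)`): a finite-state
automorphism whose activity sequence is polynomially bounded. -/
def PolyAut {d : ℕ} (g : Equiv.Perm (Vertex d)) : Prop :=
  FiniteState g ∧ ∃ p : Polynomial ℕ, ∀ k : ℕ, theta g k ≤ p.eval k

/-- A finitary automorphism (an element of `Pol(-1)`): all states at some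
level are trivial. -/
def Finitary {d : ℕ} (g : Equiv.Perm (Vertex d)) : Prop :=
  ∃ k : ℕ, ∀ v : Vertex d, v.length = k → state g v = 1

/-- A functionally recursive automorphism: a member of some finitely generated
self-similar subgroup of `Aut(T)`.  These form the group `FR(X)`. -/
def FunctionallyRecursive {d : ℕ} (g : Equiv.Perm (Vertex d)) : Prop :=
  ∃ G : Subgroup (Equiv.Perm (Vertex d)), G ≤ treeAut d ∧ SelfSimilar G ∧
    (∃ S : Set (Equiv.Perm (Vertex d)), S.Finite ∧ G = Subgroup.closure S) ∧ g ∈ G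

/-!
Order the vertices lexicographically and let `h` reflect every `⟨a⟩`-orbit through its least
vertex `m`, i.e. `h (a ^ k m) = a⁻¹ ^ k m`; then `h a = a⁻¹ h`. Since the lexicographic order
compares prefixes first, the least vertex of an orbit lies below the least vertex of the parent
orbit. This makes `h` a tree automorphism, and below a least vertex `r` with orbit length `p` the
map `h` is the reflection built in the same way from the state `b = a ^ p|_r`. Hence every state of
`h` is `a ^ n|_r * h_b * a ^ n|_u` with `r = a ^ n u` and `n < p`.

For bounded `a` all these factors lie in the set of states `a ^ j|_v` with `j` at most the orbit
length of `v`, and this set is finite: `a ^ j|_v` is the product of the states of `a` at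
`v, a v, …, a ^ (j - 1) v`, and at most `(L + 1) C` of them are nontrivial, where `C` bounds
`θ_k(a)` and every nontrivial state of `a` has an active vertex at depth at most `L`.
-/

open Equiv MulAction Function

open scoped Pointwise

theorem List.append_lt_append_of_lt_of_length_eq {α : Type*} [LinearOrder α] :
    ∀ {l₁ l₂ : List α} (t₁ t₂ : List α), l₁.length = l₂.length → l₁ < l₂ →
      l₁ ++ t₁ < l₂ ++ t₂
  | [], [], _, _, _, h => absurd h (lt_irrefl _)
  | a :: l₁, b :: l₂, t₁, t₂, hl, h => by
    rcases List.cons_lt_cons_iff.1 h with hab | ⟨rfl, htail⟩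
    · exact List.cons_lt_cons_iff.2 (Or.inl hab)
    · exact List.cons_lt_cons_iff.2
        (Or.inr ⟨rfl, append_lt_append_of_lt_of_length_eq t₁ t₂ (by simpa using hl) htail⟩)

theorem List.le_of_append_le_append_left {α : Type*} [LinearOrder α] {s t₁ t₂ : List α}
    (h : s ++ t₁ ≤ s ++ t₂) : t₁ ≤ t₂ :=
  le_of_not_gt fun h' => (List.append_left_lt h').not_ge h

namespace Equiv.Perm

variable {α : Type*} {σ : Perm α} {x : α}

theorem pow_apply_pow_apply_comm (i j : ℕ) : (σ ^ i) ((σ ^ j) x) = (σ ^ j) ((σ ^ i) x) := by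
  rw [← mul_apply, ← pow_add, add_comm, pow_add, mul_apply]

theorem pow_apply_eq_self_iff_period_dvd {n : ℕ} : (σ ^ n) x = x ↔ period σ x ∣ n :=
  pow_smul_eq_iff_period_dvd (m := σ)

theorem pow_mod_period_apply (n : ℕ) : (σ ^ (n % period σ x)) x = (σ ^ n) x :=
  pow_mod_period_smul n (m := σ)

theorem pow_add_period_mul_apply (m c : ℕ) : (σ ^ (m + period σ x * c)) x = (σ ^ m) x := by
  rw [pow_add, mul_apply, pow_apply_eq_self_iff_period_dvd.2 (dvd_mul_right _ c)]

theorem period_pow_apply (n : ℕ) : period σ ((σ ^ n) x) = period σ x := by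
  refine Nat.dvd_antisymm (pow_apply_eq_self_iff_period_dvd.1 ?_)
    (pow_apply_eq_self_iff_period_dvd.1 ?_)
  · rw [pow_apply_pow_apply_comm, pow_apply_eq_self_iff_period_dvd.2 dvd_rfl]
  · apply (σ ^ n).injective
    rw [← pow_apply_pow_apply_comm, pow_apply_eq_self_iff_period_dvd.2 dvd_rfl]

theorem injOn_pow_apply_Iio_period :
    Set.InjOn (fun n : ℕ => (σ ^ n) x) (Set.Iio (period σ x)) := by
  have := iterate_injOn_Iio_minimalPeriod (f := σ) (x := x)
  simp only [Perm.iterate_eq_pow] at this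
  exact this

variable [LinearOrder α]

open Classical in
noncomputable def orbitMinExp (σ : Perm α) (x : α) : ℕ :=
  if h : ∃ n : ℕ, ∀ k : ℕ, (σ ^ n) x ≤ (σ ^ k) x then Nat.find h else 0

noncomputable def orbitMin (σ : Perm α) (x : α) : α :=
  (σ ^ orbitMinExp σ x) x

/-- Reflects every orbit through its least point `m`: `σ ^ k m ↦ σ⁻¹ ^ k m`. -/
noncomputable def mirror (σ : Perm α) (x : α) : α :=
  (σ ^ (2 * orbitMinExp σ x)) x

theorem exists_forall_pow_apply_le (hx : 0 < period σ x) :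
    ∃ n : ℕ, ∀ k : ℕ, (σ ^ n) x ≤ (σ ^ k) x := by
  obtain ⟨n, -, hn⟩ := (Finset.range (period σ x)).exists_min_image (fun n => (σ ^ n) x)
    ⟨0, Finset.mem_range.2 hx⟩
  refine ⟨n, fun k => ?_⟩
  rw [← pow_mod_period_apply k]
  exact hn _ (Finset.mem_range.2 (Nat.mod_lt _ hx))

theorem orbitMin_le (hx : 0 < period σ x) (k : ℕ) : orbitMin σ x ≤ (σ ^ k) x := by
  classical
  have h := exists_forall_pow_apply_le hx
  rw [orbitMin, orbitMinExp, dif_pos h]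
  exact Nat.find_spec h k

theorem orbitMinExp_lt_period (hx : 0 < period σ x) : orbitMinExp σ x < period σ x := by
  classical
  have h := exists_forall_pow_apply_le hx
  rw [orbitMinExp, dif_pos h]
  refine lt_of_le_of_lt (Nat.find_min' h fun k => ?_) (Nat.mod_lt (Nat.find h) hx)
  rw [pow_mod_period_apply]
  exact Nat.find_spec h k

theorem pow_apply_eq_orbitMin (hx : 0 < period σ x) {n : ℕ}
    (h : ∀ k : ℕ, (σ ^ n) x ≤ (σ ^ k) x) : (σ ^ n) x = orbitMin σ x :=
  le_antisymm (h _) (orbitMin_le hx n)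

theorem orbitMin_pow_apply (hσ : ∀ x : α, 0 < period σ x) (x : α) (k : ℕ) :
    orbitMin σ ((σ ^ k) x) = orbitMin σ x := by
  have hk : (period σ x - 1) * k + k = period σ x * k := by
    rw [Nat.sub_one_mul, Nat.sub_add_cancel (Nat.le_mul_of_pos_left k (hσ x))]
  have hback : (σ ^ (orbitMinExp σ x + (period σ x - 1) * k)) ((σ ^ k) x) = orbitMin σ x := by
    rw [← mul_apply, ← pow_add, add_assoc, hk, pow_add_period_mul_apply]
    rfl
  rw [← hback]
  refine (pow_apply_eq_orbitMin (hσ _) fun j => ?_).symm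
  rw [hback, ← mul_apply, ← pow_add]
  exact orbitMin_le (hσ x) _

theorem mirror_eq_of_pow_apply_eq_orbitMin {n : ℕ} (h : (σ ^ n) x = orbitMin σ x) :
    mirror σ x = (σ ^ (2 * n)) x := by
  have he : (σ ^ orbitMinExp σ x) x = (σ ^ n) x := h.symm
  rw [mirror, two_mul, two_mul, pow_add, pow_add, mul_apply, mul_apply, he,
    pow_apply_pow_apply_comm, he]

theorem mirror_apply_self (hσ : ∀ x : α, 0 < period σ x) (x : α) :
    mirror σ (σ x) = σ⁻¹ (mirror σ x) := by
  set e := orbitMinExp σ x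
  set p := period σ x
  have hp := hσ x
  have hmin : (σ ^ (e + p - 1)) (σ x) = orbitMin σ (σ x) := by
    have h1 := orbitMin_pow_apply hσ x 1
    rw [pow_one] at h1
    rw [h1, ← mul_apply, ← pow_succ, Nat.sub_add_cancel (by omega), ← mul_one p,
      pow_add_period_mul_apply]
    rfl
  rw [mirror_eq_of_pow_apply_eq_orbitMin hmin, Perm.eq_inv_iff_eq, mirror, ← mul_apply,
    ← pow_succ', ← mul_apply, ← pow_succ]
  have : 2 * (e + p - 1) + 1 + 1 = 2 * e + p * 2 := by omega
  rw [this, pow_add_period_mul_apply]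

theorem mirror_pow_apply (hσ : ∀ x : α, 0 < period σ x) (x : α) (k : ℕ) :
    mirror σ ((σ ^ k) x) = (σ⁻¹ ^ k) (mirror σ x) := by
  induction k with
  | zero => rfl
  | succ k ih => rw [pow_succ', mul_apply, mirror_apply_self hσ, ih, pow_succ', mul_apply]

theorem mirror_involutive (hσ : ∀ x : α, 0 < period σ x) : Involutive (mirror σ) := fun x => by
  show mirror σ ((σ ^ (2 * orbitMinExp σ x)) x) = x
  rw [mirror_pow_apply hσ, mirror, inv_pow, Perm.inv_eq_iff_eq]

open Classical in
noncomputable def mirrorPerm (σ : Perm α) : Perm α :=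
  if h : Involutive (mirror σ) then h.toPerm else 1

theorem mirrorPerm_apply (hσ : ∀ x : α, 0 < period σ x) (x : α) :
    mirrorPerm σ x = mirror σ x := by
  rw [mirrorPerm, dif_pos (mirror_involutive hσ)]
  rfl

theorem mirrorPerm_mul_mul_mirrorPerm_inv (hσ : ∀ x : α, 0 < period σ x) :
    mirrorPerm σ * σ * (mirrorPerm σ)⁻¹ = σ⁻¹ := by
  have h : mirrorPerm σ * σ = σ⁻¹ * mirrorPerm σ := Perm.ext fun x => by
    simp only [mul_apply, mirrorPerm_apply hσ, mirror_apply_self hσ]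
  rw [h, mul_inv_cancel_right]

end Equiv.Perm

namespace TreeAut

open Perm

variable {d : ℕ} {g h : Perm (Vertex d)}

theorem length_apply (hg : g ∈ treeAut d) (v : Vertex d) : (g v).length = v.length :=
  hg.1 v

theorem apply_nil (hg : g ∈ treeAut d) : g [] = [] :=
  List.eq_nil_of_length_eq_zero (length_apply hg [])

theorem apply_prefix_apply_append (hg : g ∈ treeAut d) (v w : Vertex d) : g v <+: g (v ++ w) :=
  hg.2 v w

theorem apply_append_eq_append_drop (hg : g ∈ treeAut d) (v w : Vertex d) :
    g (v ++ w) = g v ++ (g (v ++ w)).drop v.length := by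
  obtain ⟨t, ht⟩ := apply_prefix_apply_append hg v w
  rw [← ht, ← length_apply hg v, List.drop_left]

theorem bijective_drop_apply_append (hg : g ∈ treeAut d) (v : Vertex d) :
    Function.Bijective fun w : Vertex d => (g (v ++ w)).drop v.length := by
  refine ⟨fun w₁ w₂ hw => ?_, fun z => ⟨(g⁻¹ (g v ++ z)).drop v.length, ?_⟩⟩
  · have h₁ := apply_append_eq_append_drop hg v w₁
    rw [show (g (v ++ w₁)).drop v.length = (g (v ++ w₂)).drop v.length from hw,
      ← apply_append_eq_append_drop hg v w₂] at h₁
    exact List.append_cancel_left (g.injective h₁)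
  · have hinv := apply_append_eq_append_drop (inv_mem hg) (g v) z
    rw [Perm.inv_eq_iff_eq.2 rfl, length_apply hg] at hinv
    dsimp only
    rw [← hinv, ← Perm.mul_apply, mul_inv_cancel, Perm.one_apply, ← length_apply hg v,
      List.drop_left]

theorem state_apply (hg : g ∈ treeAut d) (v w : Vertex d) :
    state g v w = (g (v ++ w)).drop v.length := by
  rw [state, dif_pos (bijective_drop_apply_append hg v)]
  rfl

theorem apply_append (hg : g ∈ treeAut d) (v w : Vertex d) : g (v ++ w) = g v ++ state g v w := by
  rw [state_apply hg]
  exact apply_append_eq_append_drop hg v w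

theorem state_eq_of_apply_append (hg : g ∈ treeAut d) {v : Vertex d} {f : Perm (Vertex d)}
    (h : ∀ w, g (v ++ w) = g v ++ f w) : state g v = f :=
  Perm.ext fun w => by rw [state_apply hg, h, ← length_apply hg v, List.drop_left]

theorem state_mem (hg : g ∈ treeAut d) (v : Vertex d) : state g v ∈ treeAut d := by
  refine ⟨fun w => ?_, fun u w => ?_⟩
  · have := congrArg List.length (apply_append hg v w)
    simp only [List.length_append, length_apply hg] at this
    omega
  · rw [state_apply hg, state_apply hg, ← List.append_assoc]
    exact (apply_prefix_apply_append hg (v ++ u) w).drop v.length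

theorem state_one (v : Vertex d) : state (1 : Perm (Vertex d)) v = 1 :=
  state_eq_of_apply_append (one_mem _) fun _ => rfl

theorem state_nil (hg : g ∈ treeAut d) : state g [] = g :=
  state_eq_of_apply_append hg fun w => by rw [apply_nil hg]; rfl

theorem state_mul (hg : g ∈ treeAut d) (hh : h ∈ treeAut d) (v : Vertex d) :
    state (g * h) v = state g (h v) * state h v :=
  state_eq_of_apply_append (mul_mem hg hh) fun w => by
    simp only [Perm.mul_apply, apply_append hh, apply_append hg]

theorem state_append (hg : g ∈ treeAut d) (u v : Vertex d) :
    state g (u ++ v) = state (state g u) v :=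
  state_eq_of_apply_append hg fun w => by
    rw [List.append_assoc, apply_append hg u, apply_append (state_mem hg u) v,
      apply_append hg u v, List.append_assoc]

theorem pow_apply_append_of_apply_eq (hg : g ∈ treeAut d) {v : Vertex d} (hv : g v = v)
    (n : ℕ) (w : Vertex d) : (g ^ n) (v ++ w) = v ++ (state g v ^ n) w := by
  induction n with
  | zero => rfl
  | succ n ih => rw [pow_succ', Perm.mul_apply, ih, apply_append hg, hv, pow_succ', Perm.mul_apply]

theorem eq_one_of_forall_state_apply_singleton (hg : g ∈ treeAut d)
    (hfix : ∀ (u : Vertex d) (x : Fin d), state g u [x] = [x]) : g = 1 := by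
  refine Perm.ext fun w => ?_
  induction w generalizing g with
  | nil => exact apply_nil hg
  | cons x w ih =>
    have hx : g [x] = [x] := by simpa [state_nil hg] using hfix [] x
    have hw : state g [x] w = w := by
      rw [ih (state_mem hg [x]) fun u y => by rw [← state_append hg]; exact hfix _ y]
      rfl
    rw [← List.singleton_append, apply_append hg, hx, hw]
    rfl

theorem period_pos (hg : g ∈ treeAut d) (v : Vertex d) : 0 < MulAction.period g v := by
  have : Finite {u : Vertex d // u.length = v.length} :=
    (List.finite_length_eq (Fin d) v.length).to_subtype
  obtain ⟨i, j, hij, he⟩ := Finite.exists_ne_map_eq_of_infinite fun n : ℕ =>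
    (⟨(g ^ n) v, length_apply (pow_mem hg n) v⟩ : {u : Vertex d // u.length = v.length})
  simp only [Subtype.mk.injEq] at he
  wlog hlt : i < j generalizing i j
  · exact this j i hij.symm he.symm (by omega)
  refine MulAction.period_pos_of_fixed (Nat.sub_pos_of_lt hlt) ((g ^ i).injective ?_)
  show (g ^ i) ((g ^ (j - i)) v) = (g ^ i) v
  rw [← Perm.mul_apply, ← pow_add, Nat.add_sub_cancel' hlt.le, he]

variable {a : Perm (Vertex d)}

theorem pow_apply_eq_orbitMin_of_append (ha : a ∈ treeAut d) {v w : Vertex d} {n : ℕ}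
    (h : (a ^ n) (v ++ w) = orbitMin a (v ++ w)) : (a ^ n) v = orbitMin a v := by
  refine pow_apply_eq_orbitMin (period_pos ha v) fun k => le_of_not_gt fun hk => ?_
  have hlt := List.append_lt_append_of_lt_of_length_eq (state (a ^ k) v w) (state (a ^ n) v w)
    (by rw [length_apply (pow_mem ha k), length_apply (pow_mem ha n)]) hk
  rw [← apply_append (pow_mem ha k), ← apply_append (pow_mem ha n), h] at hlt
  exact hlt.not_ge (orbitMin_le (period_pos ha _) k)

theorem mirror_prefix_mirror_append (ha : a ∈ treeAut d) (v w : Vertex d) :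
    mirror a v <+: mirror a (v ++ w) := by
  have h : (a ^ orbitMinExp a (v ++ w)) (v ++ w) = orbitMin a (v ++ w) := rfl
  rw [mirror_eq_of_pow_apply_eq_orbitMin (pow_apply_eq_orbitMin_of_append ha h)]
  exact apply_prefix_apply_append (pow_mem ha _) v w

theorem mirrorPerm_mem_treeAut (ha : a ∈ treeAut d) : mirrorPerm a ∈ treeAut d := by
  refine ⟨fun v => ?_, fun v w => ?_⟩
  · rw [mirrorPerm_apply (period_pos ha)]
    exact length_apply (pow_mem ha _) v
  · simp only [mirrorPerm_apply (period_pos ha)]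
    exact mirror_prefix_mirror_append ha v w

theorem mirror_append_of_orbitMin_eq (ha : a ∈ treeAut d) {r : Vertex d}
    (hr : orbitMin a r = r) (w : Vertex d) :
    mirror a (r ++ w) = r ++ mirror (state (a ^ MulAction.period a r) r) w := by
  set p := MulAction.period a r
  set b := state (a ^ p) r
  have hN : (a ^ orbitMinExp a (r ++ w)) (r ++ w) = orbitMin a (r ++ w) := rfl
  obtain ⟨j, hj⟩ : p ∣ orbitMinExp a (r ++ w) := pow_apply_eq_self_iff_period_dvd.1
    ((pow_apply_eq_orbitMin_of_append ha hN).trans hr)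
  have hshift : ∀ i : ℕ, (a ^ (p * i)) (r ++ w) = r ++ (b ^ i) w := fun i => by
    rw [pow_mul]
    exact pow_apply_append_of_apply_eq (pow_mem ha p)
      (pow_apply_eq_self_iff_period_dvd.2 dvd_rfl) i w
  have hb : (b ^ j) w = orbitMin b w := by
    refine pow_apply_eq_orbitMin (period_pos (state_mem (pow_mem ha p) r) w) fun k => ?_
    refine List.le_of_append_le_append_left (s := r) ?_
    rw [← hshift, ← hshift, ← hj, hN]
    exact orbitMin_le (period_pos ha _) _
  rw [mirror_eq_of_pow_apply_eq_orbitMin hb, mirror, hj, mul_left_comm, hshift]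

theorem state_mirrorPerm (ha : a ∈ treeAut d) (u : Vertex d) :
    state (mirrorPerm a) u =
      state (a ^ orbitMinExp a u) (orbitMin a u) *
        mirrorPerm (state (a ^ MulAction.period a (orbitMin a u)) (orbitMin a u)) *
        state (a ^ orbitMinExp a u) u := by
  set n := orbitMinExp a u
  set r := orbitMin a u
  set b := state (a ^ MulAction.period a r) r
  have hb : b ∈ treeAut d := state_mem (pow_mem ha _) r
  have hr : orbitMin a r = r := orbitMin_pow_apply (period_pos ha) u n
  refine state_eq_of_apply_append (mirrorPerm_mem_treeAut ha) fun w => ?_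
  simp only [mirrorPerm_apply (period_pos ha), mirrorPerm_apply (period_pos hb), Perm.mul_apply]
  have hsplit : (a ^ n) (u ++ w) = r ++ state (a ^ n) u w := apply_append (pow_mem ha n) u w
  have hmirror : (a ^ n) (mirror a (r ++ state (a ^ n) u w)) = mirror a (u ++ w) := by
    rw [← hsplit, mirror_pow_apply (period_pos ha), inv_pow, ← Perm.mul_apply, mul_inv_cancel,
      Perm.one_apply]
  rw [← hmirror, mirror_append_of_orbitMin_eq ha hr, apply_append (pow_mem ha n)]
  congr 1
  rw [mirror, two_mul, pow_add, Perm.mul_apply]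
  rfl

def orbitStates (a : Perm (Vertex d)) : Set (Perm (Vertex d)) :=
  {s | ∃ v : Vertex d, ∃ j ≤ MulAction.period a v, s = state (a ^ j) v}

theorem finiteState_mirrorPerm (ha : a ∈ treeAut d) (hT : (orbitStates a).Finite) :
    FiniteState (mirrorPerm a) := by
  refine ((hT.prod (hT.prod hT)).image fun s => s.1 * mirrorPerm s.2.1 * s.2.2).subset ?_
  rintro _ ⟨u, rfl⟩
  have hn := orbitMinExp_lt_period (period_pos ha u)
  refine ⟨(_, _, _), ⟨⟨orbitMin a u, orbitMinExp a u, ?_, rfl⟩, ⟨orbitMin a u, _, le_rfl, rfl⟩,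
    ⟨u, _, hn.le, rfl⟩⟩, (state_mirrorPerm ha u).symm⟩
  rw [orbitMin, period_pow_apply]
  exact hn.le

def activeVertices (g : Perm (Vertex d)) (k : ℕ) : Set (Vertex d) :=
  {v | v.length = k ∧ ∃ x : Fin d, state g v [x] ≠ [x]}

theorem activeVertices_finite (g : Perm (Vertex d)) (k : ℕ) : (activeVertices g k).Finite :=
  (List.finite_length_eq (Fin d) k).subset fun _ hv => hv.1

theorem theta_eq_ncard (g : Perm (Vertex d)) (k : ℕ) : theta g k = (activeVertices g k).ncard :=
  Nat.card_coe_set_eq _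

theorem exists_active_depth_bound (ha : a ∈ treeAut d) (hfs : FiniteState a) :
    ∃ L : ℕ, ∀ v : Vertex d, state a v ≠ 1 →
      ∃ u : Vertex d, u.length ≤ L ∧ v ++ u ∈ activeVertices a (v.length + u.length) := by
  let depth : Perm (Vertex d) → ℕ := fun q =>
    sInf {n | ∃ u : Vertex d, u.length = n ∧ ∃ x : Fin d, state q u [x] ≠ [x]}
  obtain ⟨L, hL⟩ := (hfs.image depth).bddAbove
  refine ⟨L, fun v hv => ?_⟩
  obtain ⟨u, x, hx⟩ : ∃ (u : Vertex d) (x : Fin d), state (state a v) u [x] ≠ [x] := by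
    by_contra! h
    exact hv (eq_one_of_forall_state_apply_singleton (state_mem ha v) h)
  obtain ⟨u', hu', x', hx'⟩ := Nat.sInf_mem (show Set.Nonempty
    {n | ∃ u : Vertex d, u.length = n ∧ ∃ x : Fin d, state (state a v) u [x] ≠ [x]} from
      ⟨_, u, rfl, x, hx⟩)
  refine ⟨u', hu'.le.trans (hL (Set.mem_image_of_mem depth (Set.mem_range_self v))),
    List.length_append, x', ?_⟩
  rwa [state_append ha]

open Classical Finset in
theorem card_filter_state_ne_one_le (ha : a ∈ treeAut d) {L C : ℕ}
    (hL : ∀ v : Vertex d, state a v ≠ 1 →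
      ∃ u : Vertex d, u.length ≤ L ∧ v ++ u ∈ activeVertices a (v.length + u.length))
    (hθ : ∀ k, theta a k ≤ C) (v : Vertex d) {j : ℕ} (hj : j ≤ MulAction.period a v) :
    #{t ∈ Finset.range j | state a ((a ^ t) v) ≠ 1} ≤ (L + 1) * C := by
  choose! u hu hact using hL
  let level : ℕ → Finset (Vertex d) := fun l => (activeVertices_finite a (v.length + l)).toFinset
  calc #{t ∈ Finset.range j | state a ((a ^ t) v) ≠ 1}
      ≤ #((Finset.range (L + 1)).biUnion level) := by
        refine Finset.card_le_card_of_injOn (fun t => (a ^ t) v ++ u ((a ^ t) v)) (fun t ht => ?_)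
          fun t₁ ht₁ t₂ ht₂ heq => ?_
        · obtain ⟨-, hne⟩ := Finset.mem_filter.1 (Finset.mem_coe.1 ht)
          have hmem := hact _ hne
          rw [length_apply (pow_mem ha t)] at hmem
          exact Finset.mem_coe.2 (Finset.mem_biUnion.2 ⟨_,
            Finset.mem_range.2 (Nat.lt_succ_of_le (hu _ hne)), (Set.Finite.mem_toFinset _).2 hmem⟩)
        · have ht₁j := Finset.mem_range.1 (Finset.mem_filter.1 (Finset.mem_coe.1 ht₁)).1
          have ht₂j := Finset.mem_range.1 (Finset.mem_filter.1 (Finset.mem_coe.1 ht₂)).1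
          refine injOn_pow_apply_Iio_period (ht₁j.trans_le hj) (ht₂j.trans_le hj)
            (List.append_inj heq ?_).1
          rw [length_apply (pow_mem ha t₁), length_apply (pow_mem ha t₂)]
    _ ≤ #(Finset.range (L + 1)) * C := Finset.card_biUnion_le_card_mul _ level _ fun l _ => by
        rw [← Set.ncard_eq_toFinset_card _ (activeVertices_finite a _), ← theta_eq_ncard]
        exact hθ _
    _ = (L + 1) * C := by rw [Finset.card_range]

open Classical Finset in
theorem state_pow_mem_pow (ha : a ∈ treeAut d) (v : Vertex d) (j : ℕ) :
    state (a ^ j) v ∈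
      insert 1 (Set.range (state a)) ^ #{t ∈ Finset.range j | state a ((a ^ t) v) ≠ 1} := by
  induction j with
  | zero => simp [state_one]
  | succ j ih =>
    rw [pow_succ', state_mul ha (pow_mem ha j), Finset.range_add_one, filter_insert]
    split_ifs with h
    · rw [card_insert_of_notMem (by simp), pow_succ']
      exact Set.mul_mem_mul (Set.mem_insert_of_mem _ ⟨_, rfl⟩) ih
    · rw [not_not.1 h, one_mul]
      exact ih

theorem orbitStates_finite (ha : a ∈ treeAut d) (hfs : FiniteState a) {C : ℕ}
    (hθ : ∀ k, theta a k ≤ C) : (orbitStates a).Finite := by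
  classical
  obtain ⟨L, hL⟩ := exists_active_depth_bound ha hfs
  have hS : (insert 1 (Set.range (state a))).Finite := hfs.insert 1
  refine (hS.toFinset ^ ((L + 1) * C)).finite_toSet.subset ?_
  rintro _ ⟨v, j, hj, rfl⟩
  rw [Finset.coe_pow, hS.coe_toFinset]
  exact Set.pow_subset_pow_right (Set.mem_insert 1 _) (card_filter_state_ne_one_le ha hL hθ v hj)
    (state_pow_mem_pow ha v j)

end TreeAut

theorem bounded_conj_inv_in_FSG_general
    (d : ℕ) (a : Equiv.Perm (Vertex d))
    (ha : IsTreeAut a) (hba : BoundedAut a) :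
    ∃ h : Equiv.Perm (Vertex d), IsTreeAut h ∧ FiniteState h ∧ h * a * h⁻¹ = a⁻¹ := by
  obtain ⟨hfs, C, hθ⟩ := hba
  exact ⟨a.mirrorPerm, TreeAut.mirrorPerm_mem_treeAut ha,
    TreeAut.finiteState_mirrorPerm ha (TreeAut.orbitStates_finite ha hfs hθ),
    Perm.mirrorPerm_mul_mul_mirrorPerm_inv (TreeAut.period_pos ha)⟩

/-- Every bounded automorphism `a` of the regular rooted
`d`-ary tree is conjugate to `a⁻¹` in the group `F(X)` of finite-state
automorphisms. -/
theorem bounded_conj_inv_in_FSG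
    (d : ℕ) (hd : 2 ≤ d) (a : Equiv.Perm (Vertex d))
    (ha : IsTreeAut a) (hba : BoundedAut a) :
    ∃ h : Equiv.Perm (Vertex d), IsTreeAut h ∧ FiniteState h ∧ h * a * h⁻¹ = a⁻¹ :=
  bounded_conj_inv_in_FSG_general d a ha hba
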